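/- arXiv:2209.09901 — 5 statements merged into one kernel-verified Lean document; each statement's English description precedes it below -/
import Mathlib

section
/- Let S_n = ∑_{k=1}^n X'_k where X'_1, X'_2, … are i.i.d. symmetric ℤ-valued random variables. If for every even n there exists a point x ∈ {−3n,…,3n} with P(S_n = x) ≥ 0.5/(6n+1), then P(S_n = 0) ≥ 0.5/(6n+1) for every even n, and consequently ∑_{n=1}^∞ P(S_n = 0) = ∞. -/
/-!
Split `S_{2m} = A + B` with `A = S_m` and `B = S_{2m} - S_m`. These are independent, and `B` has
the law of `A`, which by symmetry is the law of `-A`. With `p` the mass function of `A`,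
`P(S_{2m} = x) = ∑ j, p j * p (j - x)` is an autocorrelation, hence largest at `x = 0`. So the
anti-concentration mass at some point transfers to `0`, and the resulting lower bounds
`0.5 / (12 k + 1)` on `P(S_{2k} = 0)` diverge like the harmonic series.
-/

open MeasureTheory Finset ProbabilityTheory
open scoped ENNReal

theorem Real.not_summable_div_mul_add {c a b : ℝ} (hc : c ≠ 0) (ha : 0 < a) (hb : 0 ≤ b) :
    ¬ Summable fun n : ℕ => c / (a * n + b) := by
  have hharm := (Real.summable_one_div_nat_add_rpow (b / a) 1).not.mpr (lt_irrefl 1)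
  rw [← summable_mul_left_iff (div_ne_zero hc ha.ne')] at hharm
  refine fun hs => hharm (hs.congr fun n => ?_)
  rw [Real.rpow_one, abs_of_nonneg (by positivity), div_mul_div_comm, mul_one, mul_add,
    mul_div_cancel₀ _ ha.ne']

namespace ENNReal

theorem two_mul_le_add_sq (a b : ℝ≥0∞) : 2 * a * b ≤ a ^ 2 + b ^ 2 := by
  rcases le_total a b with h | h
  · obtain ⟨c, rfl⟩ := exists_add_of_le h
    calc 2 * a * (a + c) ≤ 2 * a * (a + c) + c ^ 2 := le_self_add
      _ = a ^ 2 + (a + c) ^ 2 := by ring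
  · obtain ⟨c, rfl⟩ := exists_add_of_le h
    calc 2 * (b + c) * b ≤ 2 * (b + c) * b + c ^ 2 := le_self_add
      _ = (b + c) ^ 2 + b ^ 2 := by ring

/-- By AM-GM, `2 p j p (j + x) ≤ p j ^ 2 + p (j + x) ^ 2`, and both squares sum to `∑ p j ^ 2`. -/
theorem tsum_mul_add_le_tsum_mul_self {G : Type*} [AddGroup G] (p : G → ℝ≥0∞) (x : G) :
    ∑' j, p j * p (j + x) ≤ ∑' j, p j * p j := by
  have h2 : 2 * ∑' j, p j * p (j + x) ≤ 2 * ∑' j, p j * p j :=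
    calc 2 * ∑' j, p j * p (j + x) = ∑' j, 2 * p j * p (j + x) := by
          rw [← ENNReal.tsum_mul_left]; simp only [mul_assoc]
      _ ≤ ∑' j, (p j ^ 2 + p (j + x) ^ 2) := ENNReal.tsum_le_tsum fun j => two_mul_le_add_sq _ _
      _ = ∑' j, p j ^ 2 + ∑' j, p (j + x) ^ 2 := ENNReal.tsum_add
      _ = 2 * ∑' j, p j * p j := by
          rw [show ∑' j, p (j + x) ^ 2 = ∑' j, p j ^ 2 from (Equiv.addRight x).tsum_eq (p · ^ 2),
            ← two_mul]
          simp only [sq]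
  exact (ENNReal.mul_le_mul_iff_right two_ne_zero ofNat_ne_top).mp h2

theorem tsum_ofReal_eq_top_of_not_summable {α : Type*} {f : α → ℝ} (hf : ∀ i, 0 ≤ f i)
    (h : ¬ Summable f) : ∑' i, ENNReal.ofReal (f i) = ∞ := by
  by_contra hne
  refine h ?_
  simpa only [ENNReal.toReal_ofReal (hf _)] using ENNReal.summable_toReal hne

theorem tsum_eq_top_of_ofReal_div_le_of_even {f : ℕ → ℝ≥0∞} {c a : ℝ} (hc : 0 < c)
    (ha : 0 < a) (hf : ∀ n : ℕ, Even n → ENNReal.ofReal (c / (a * n + 1)) ≤ f n) :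
    ∑' n, f n = ∞ := by
  have hdiv : ∑' k : ℕ, ENNReal.ofReal (c / (2 * a * k + 1)) = ∞ :=
    ENNReal.tsum_ofReal_eq_top_of_not_summable (fun k => by positivity)
      (Real.not_summable_div_mul_add hc.ne' (by positivity) zero_le_one)
  refine top_le_iff.mp (hdiv ▸ ?_)
  calc ∑' k : ℕ, ENNReal.ofReal (c / (2 * a * k + 1))
      ≤ ∑' k, f (2 * k) := ENNReal.tsum_le_tsum fun k => by
        convert hf (2 * k) (even_two_mul k) using 4
        push_cast
        ring
    _ ≤ ∑' n, f n := ENNReal.tsum_comp_le_tsum_of_injective (mul_right_injective₀ two_ne_zero) f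

end ENNReal

namespace ProbabilityTheory

variable {Ω : Type*} [MeasurableSpace Ω] {μ : Measure Ω}

theorem IndepFun.measure_add_eq_tsum {A B : Ω → ℤ} (hA : Measurable A) (hB : Measurable B)
    (hAB : IndepFun A B μ) (x : ℤ) :
    μ {ω | A ω + B ω = x} = ∑' j, μ {ω | A ω = j} * μ {ω | B ω = x - j} := by
  have hunion : {ω | A ω + B ω = x} = ⋃ j : ℤ, {ω | A ω = j} ∩ {ω | B ω = x - j} := by
    ext ω
    simp only [Set.mem_ofPred_eq, Set.mem_iUnion, Set.mem_inter_iff]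
    exact ⟨fun h => ⟨A ω, rfl, by omega⟩, fun ⟨j, hj, hj'⟩ => by omega⟩
  rw [hunion, measure_iUnion]
  · exact tsum_congr fun j => hAB.measure_inter_preimage_eq_mul _ _
      (measurableSet_singleton j) (measurableSet_singleton (x - j))
  · intro i j hij
    exact Set.disjoint_left.mpr fun ω hi hj => hij (hi.1.symm.trans hj.1)
  · exact fun j => (hA (measurableSet_singleton j)).inter (hB (measurableSet_singleton _))

theorem IndepFun.measure_add_eq_le_measure_add_eq_zero {A B : Ω → ℤ} (hA : Measurable A)
    (hB : Measurable B) (hAB : IndepFun A B μ) (hBA : ∀ j, μ {ω | B ω = j} = μ {ω | A ω = -j})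
    (x : ℤ) : μ {ω | A ω + B ω = x} ≤ μ {ω | A ω + B ω = 0} := by
  simp only [hAB.measure_add_eq_tsum hA hB, hBA, neg_sub, sub_zero]
  simpa only [sub_eq_add_neg] using ENNReal.tsum_mul_add_le_tsum_mul_self (μ {ω | A ω = ·}) (-x)

theorem iIndepFun.indepFun_sum_sum {ι : Type*} {X : ι → Ω → ℤ} (hmeas : ∀ k, Measurable (X k))
    (hindep : iIndepFun X μ) {F G : Finset ι} (hFG : Disjoint F G) :
    IndepFun (fun ω => ∑ k ∈ F, X k ω) (fun ω => ∑ k ∈ G, X k ω) μ := by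
  have h := (hindep.indepFun_finset F G hFG hmeas).comp
    (φ := fun v : F → ℤ => ∑ i, v i) (ψ := fun v : G → ℤ => ∑ i, v i) (by fun_prop) (by fun_prop)
  convert h using 1 <;> funext ω <;> exact (Finset.sum_coe_sort _ (X · ω)).symm

theorem iIndepFun.measure_sum_eq_tsum_erase {ι : Type*} [DecidableEq ι] {X : ι → Ω → ℤ}
    (hmeas : ∀ k, Measurable (X k)) (hindep : iIndepFun X μ) {F : Finset ι} {i : ι} (hi : i ∈ F)
    (x : ℤ) : μ {ω | ∑ k ∈ F, X k ω = x}
      = ∑' j, μ {ω | ∑ k ∈ F.erase i, X k ω = j} * μ {ω | X i ω = x - j} := by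
  have hrest : Measurable fun ω => ∑ k ∈ F.erase i, X k ω :=
    Finset.measurable_sum _ fun k _ => hmeas k
  have hindep_rest : IndepFun (fun ω => ∑ k ∈ F.erase i, X k ω) (X i) μ := by
    simpa only [Finset.sum_fn] using hindep.indepFun_finsetSum_of_notMem hmeas (F.notMem_erase i)
  simp only [← Finset.sum_erase_add F _ hi]
  exact hindep_rest.measure_add_eq_tsum hrest (hmeas i) x

theorem iIndepFun.measure_sum_eq_neg_of_card_eq {ι : Type*} [DecidableEq ι] {X : ι → Ω → ℤ}
    (hmeas : ∀ k, Measurable (X k)) (hindep : iIndepFun X μ) {p : ℤ → ℝ≥0∞}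
    (hp : ∀ i j, μ {ω | X i ω = j} = p j) (hpsym : ∀ j, p (-j) = p j)
    {F G : Finset ι} (hFG : F.card = G.card) (x : ℤ) :
    μ {ω | ∑ k ∈ F, X k ω = x} = μ {ω | ∑ k ∈ G, X k ω = -x} := by
  induction hn : F.card generalizing F G x with
  | zero =>
    rw [Finset.card_eq_zero.mp hn, Finset.card_eq_zero.mp (hFG.symm.trans hn)]
    simp only [Finset.sum_empty, @eq_comm ℤ 0, neg_eq_zero]
  | succ n ih =>
    obtain ⟨i, hi⟩ : F.Nonempty := Finset.card_pos.mp (by omega)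
    obtain ⟨i', hi'⟩ : G.Nonempty := Finset.card_pos.mp (by omega)
    rw [hindep.measure_sum_eq_tsum_erase hmeas hi, hindep.measure_sum_eq_tsum_erase hmeas hi']
    conv_rhs => rw [← (Equiv.neg ℤ).tsum_eq]
    have hF' : (F.erase i).card = n := by rw [Finset.card_erase_of_mem hi, hn, Nat.add_sub_cancel]
    have hG' : (F.erase i).card = (G.erase i').card := by
      rw [Finset.card_erase_of_mem hi, Finset.card_erase_of_mem hi', hFG]
    refine tsum_congr fun j => ?_
    rw [Equiv.neg_apply, ih hG' j hF', hp, hp, ← hpsym (x - j), neg_sub, sub_neg_eq_add,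
      neg_add_eq_sub]

theorem iIndepFun.measure_sum_range_eq_le_eq_zero {X : ℕ → Ω → ℤ} (hmeas : ∀ k, Measurable (X k))
    (hindep : iIndepFun X μ) {p : ℤ → ℝ≥0∞} (hp : ∀ i j, μ {ω | X i ω = j} = p j)
    (hpsym : ∀ j, p (-j) = p j) {n : ℕ} (hn : Even n) (x : ℤ) :
    μ {ω | ∑ k ∈ range n, X k ω = x} ≤ μ {ω | ∑ k ∈ range n, X k ω = 0} := by
  obtain ⟨m, rfl⟩ := hn
  simp only [← Finset.sum_range_add_sum_Ico _ (Nat.le_add_right m m)]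
  refine IndepFun.measure_add_eq_le_measure_add_eq_zero (Finset.measurable_sum _ fun k _ => hmeas k)
    (Finset.measurable_sum _ fun k _ => hmeas k) ?_ ?_ x
  · exact hindep.indepFun_sum_sum hmeas
      (by simpa only [← Finset.range_eq_Ico] using Finset.Ico_disjoint_Ico_consecutive 0 m (m + m))
  · refine fun j => hindep.measure_sum_eq_neg_of_card_eq hmeas hp hpsym ?_ j
    simp

end ProbabilityTheory

theorem stmt_3_general {Ω : Type*} [MeasurableSpace Ω] (μ : Measure Ω)
    (X : ℕ → Ω → ℤ) (hXmeas : ∀ k, Measurable (X k))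
    (hindep : ProbabilityTheory.iIndepFun X μ)
    (hident : ∀ k, μ.map (X k) = μ.map (X 0))
    (hsym : ∀ j : ℤ, μ {ω | X 0 ω = j} = μ {ω | X 0 ω = -j})
    (S : ℕ → Ω → ℤ) (hS : ∀ n ω, S n ω = ∑ k ∈ Finset.range n, X k ω)
    (hanti : ∀ n : ℕ, Even n → ∃ x : ℤ, |x| ≤ 3 * n ∧
      ENNReal.ofReal (0.5 / (6 * n + 1)) ≤ μ {ω | S n ω = x}) :
    (∀ n : ℕ, Even n →
      ENNReal.ofReal (0.5 / (6 * n + 1)) ≤ μ {ω | S n ω = 0}) ∧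
    (∑' n : ℕ, μ {ω | S n ω = 0}) = ⊤ := by
  have hlaw : ∀ k j, μ {ω | X k ω = j} = μ {ω | X 0 ω = j} := fun k j =>
    IdentDistrib.measure_mem_eq ⟨(hXmeas k).aemeasurable, (hXmeas 0).aemeasurable, hident k⟩
      (measurableSet_singleton j)
  have hmode : ∀ n, Even n → ∀ x, μ {ω | S n ω = x} ≤ μ {ω | S n ω = 0} := by
    simpa only [hS] using fun n hn x => hindep.measure_sum_range_eq_le_eq_zero hXmeas hlaw
      (fun j => (hsym j).symm) hn x
  have hzero : ∀ n : ℕ, Even n → ENNReal.ofReal (0.5 / (6 * n + 1)) ≤ μ {ω | S n ω = 0} := by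
    intro n hn
    obtain ⟨x, -, hx⟩ := hanti n hn
    exact hx.trans (hmode n hn x)
  exact ⟨hzero, ENNReal.tsum_eq_top_of_ofReal_div_le_of_even (by norm_num) (by norm_num) hzero⟩

/-- For sums `S_n` of i.i.d. symmetric `ℤ`-valued random variables, if for every even `n`
some point `x ∈ {−3n,…,3n}` carries mass `P(S_n = x) ≥ 0.5/(6n+1)`, then for every even `n`
one has `P(S_n = 0) ≥ 0.5/(6n+1)`, and consequently `∑_n P(S_n = 0) = ∞`. -/
theorem stmt_3 {Ω : Type*} [MeasurableSpace Ω] (μ : Measure Ω) [IsProbabilityMeasure μ]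
    (X : ℕ → Ω → ℤ) (hXmeas : ∀ k, Measurable (X k))
    (hindep : ProbabilityTheory.iIndepFun X μ)
    (hident : ∀ k, μ.map (X k) = μ.map (X 0))
    (hsym : ∀ j : ℤ, μ {ω | X 0 ω = j} = μ {ω | X 0 ω = -j})
    (S : ℕ → Ω → ℤ) (hS : ∀ n ω, S n ω = ∑ k ∈ Finset.range n, X k ω)
    (hanti : ∀ n : ℕ, Even n → ∃ x : ℤ, |x| ≤ 3 * n ∧
      ENNReal.ofReal (0.5 / (6 * n + 1)) ≤ μ {ω | S n ω = x}) :
    (∀ n : ℕ, Even n →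
      ENNReal.ofReal (0.5 / (6 * n + 1)) ≤ μ {ω | S n ω = 0}) ∧
    (∑' n : ℕ, μ {ω | S n ω = 0}) = ⊤ :=
  stmt_3_general μ X hXmeas hindep hident hsym S hS hanti
end

section
/- Let γ ∈ (0, 1/2) and let S, T be independent random variables uniformly distributed on (0,1). Define X = min(S,T)^γ · max(S,T)^{1−γ}. Then there exists a constant C' < ∞ such that P(X ≤ ε) ≤ C'·ε² for all ε > 0. -/
/-!
If `m = min(s,t)` lies in the dyadic shell `(ε/2^(k+1), ε/2^k]` and `m^γ M^(1-γ) ≤ ε` for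
`M = max(s,t)`, then `M ≤ ε (2^β)^(k+1)` with `β = γ/(1-γ)`. So the sublevel set `{X ≤ ε}` is
covered by the rectangles of area `ε² (2^β/2)^(k+1)` and their reflections, and `γ < 1/2` means
`β < 1`, so these areas form a convergent geometric series of total `O(ε²)`. The joint law of
`(S, T)` is Lebesgue measure on the unit square, dominated by Lebesgue measure on the quadrant.
-/

open MeasureTheory ProbabilityTheory Set

noncomputable def attachmentKernel (γ s t : ℝ) : ℝ := min s t ^ γ * max s t ^ (1 - γ)

lemma le_rpow_mul_rpow {γ m M : ℝ} (hγ : γ ≤ 1) (hm : 0 ≤ m) (hmM : m ≤ M) :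
    m ≤ m ^ γ * M ^ (1 - γ) :=
  calc m = m ^ γ * m ^ (1 - γ) := by
        rw [← Real.rpow_add' hm (by norm_num), add_sub_cancel, Real.rpow_one]
    _ ≤ m ^ γ * M ^ (1 - γ) := by gcongr

lemma le_mul_rpow_of_rpow_mul_rpow_le {γ ε q m M : ℝ} (hγ0 : 0 < γ) (hγ1 : γ < 1) (hε : 0 < ε)
    (hq : 0 < q) (hm : ε / q ≤ m) (hM : 0 ≤ M) (h : m ^ γ * M ^ (1 - γ) ≤ ε) :
    M ≤ ε * q ^ (γ / (1 - γ)) := by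
  have h1γ : 0 < 1 - γ := by linarith
  rw [← Real.rpow_le_rpow_iff hM (by positivity) h1γ]
  have hpow : (ε * q ^ (γ / (1 - γ))) ^ (1 - γ) = ε / (ε / q) ^ γ := by
    rw [Real.mul_rpow hε.le (by positivity), ← Real.rpow_mul hq.le, div_mul_cancel₀ _ h1γ.ne',
      Real.div_rpow hε.le hq.le, Real.rpow_sub hε, Real.rpow_one]
    field_simp
  rw [hpow, le_div_iff₀ (by positivity)]
  calc M ^ (1 - γ) * (ε / q) ^ γ ≤ M ^ (1 - γ) * m ^ γ := by gcongr
    _ ≤ ε := by linarith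

lemma exists_dyadic_scale {ε m : ℝ} (hm : 0 < m) (hmε : m ≤ ε) :
    ∃ k : ℕ, ε / 2 ^ (k + 1) < m ∧ m ≤ ε / 2 ^ k := by
  obtain ⟨k, hk, hk'⟩ := exists_nat_pow_near ((one_le_div hm).2 hmε) one_lt_two
  refine ⟨k, ?_, ?_⟩
  · rwa [div_lt_iff₀ (by positivity), mul_comm, ← div_lt_iff₀ hm]
  · rwa [le_div_iff₀ (by positivity), mul_comm, ← le_div_iff₀ hm]

def dyadicBox (ε β : ℝ) (k : ℕ) : Set (ℝ × ℝ) :=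
  Ioc (ε / 2 ^ (k + 1)) (ε / 2 ^ k) ×ˢ Ioc 0 (ε * (2 ^ β) ^ (k + 1))

lemma volume_dyadicBox {ε : ℝ} (hε : 0 ≤ ε) (β : ℝ) (k : ℕ) :
    volume (dyadicBox ε β k) = ENNReal.ofReal (ε ^ 2 * (2 ^ β / 2) ^ (k + 1)) := by
  have hwidth : ε / 2 ^ k - ε / 2 ^ (k + 1) = ε / 2 ^ (k + 1) := by ring
  rw [dyadicBox, Measure.volume_eq_prod, Measure.prod_prod, Real.volume_Ioc, Real.volume_Ioc,
    hwidth, sub_zero, ← ENNReal.ofReal_mul (div_nonneg hε (by positivity))]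
  congr 1
  rw [div_pow]
  field_simp

lemma exists_mem_dyadicBox {γ ε m M : ℝ} (hγ0 : 0 < γ) (hγ1 : γ < 1) (hm : 0 < m) (hmM : m ≤ M)
    (h : m ^ γ * M ^ (1 - γ) ≤ ε) : ∃ k, (m, M) ∈ dyadicBox ε (γ / (1 - γ)) k := by
  have hmε : m ≤ ε := (le_rpow_mul_rpow hγ1.le hm.le hmM).trans h
  obtain ⟨k, hk, hk'⟩ := exists_dyadic_scale hm hmε
  refine ⟨k, ⟨hk, hk'⟩, hm.trans_le hmM, ?_⟩
  rw [Real.rpow_pow_comm zero_le_two]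
  exact le_mul_rpow_of_rpow_mul_rpow_le hγ0 hγ1 (hm.trans_le hmε) (by positivity) hk.le
    (hm.le.trans hmM) h

lemma attachmentKernel_sublevel_subset {γ ε : ℝ} (hγ0 : 0 < γ) (hγ1 : γ < 1) :
    {p : ℝ × ℝ | 0 < p.1 ∧ 0 < p.2 ∧ attachmentKernel γ p.1 p.2 ≤ ε} ⊆
      ⋃ k, dyadicBox ε (γ / (1 - γ)) k ∪ Prod.swap ⁻¹' dyadicBox ε (γ / (1 - γ)) k := by
  rintro ⟨s, t⟩ ⟨hs, ht, h⟩
  simp only [mem_iUnion, mem_union, mem_preimage, Prod.swap_prod_mk]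
  rcases le_total s t with hst | hts
  · rw [attachmentKernel, min_eq_left hst, max_eq_right hst] at h
    obtain ⟨k, hk⟩ := exists_mem_dyadicBox hγ0 hγ1 hs hst h
    exact ⟨k, Or.inl hk⟩
  · rw [attachmentKernel, min_eq_right hts, max_eq_left hts] at h
    obtain ⟨k, hk⟩ := exists_mem_dyadicBox hγ0 hγ1 ht hts h
    exact ⟨k, Or.inr hk⟩

lemma volume_union_preimage_swap_le {α : Type*} [MeasureSpace α]
    [SigmaFinite (volume : Measure α)] (s : Set (α × α)) :
    volume (s ∪ Prod.swap ⁻¹' s) ≤ 2 * volume s :=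
  calc volume (s ∪ Prod.swap ⁻¹' s) ≤ volume s + volume (Prod.swap ⁻¹' s) := measure_union_le _ _
    _ = 2 * volume s := by
      have hswap : volume (Prod.swap ⁻¹' s) = volume s :=
        (Measure.measurePreserving_swap (μ := volume) (ν := volume)).measure_preimage_equiv
          (f := MeasurableEquiv.prodComm) s
      rw [hswap, two_mul]

lemma volume_attachmentKernel_sublevel_le {γ : ℝ} (hγ0 : 0 < γ) (hγ : γ < 1 / 2) :
    ∃ C : ℝ, 0 < C ∧ ∀ ε : ℝ, 0 < ε →
      volume {p : ℝ × ℝ | 0 < p.1 ∧ 0 < p.2 ∧ attachmentKernel γ p.1 p.2 ≤ ε} ≤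
        ENNReal.ofReal (C * ε ^ 2) := by
  have hγ1 : γ < 1 := by linarith
  set β := γ / (1 - γ)
  set r : ℝ := 2 ^ β / 2
  have hβ : β < 1 := by rw [div_lt_one (by linarith)]; linarith
  have hr0 : 0 < r := by positivity
  have hr1 : r < 1 := by
    rw [div_lt_one two_pos]
    simpa using Real.rpow_lt_rpow_of_exponent_lt one_lt_two hβ
  refine ⟨2 * r / (1 - r), div_pos (by positivity) (by linarith), fun ε hε ↦ ?_⟩
  have hbox (k : ℕ) : volume (dyadicBox ε β k ∪ Prod.swap ⁻¹' dyadicBox ε β k) ≤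
      ENNReal.ofReal (2 * ε ^ 2 * r ^ (k + 1)) := by
    rw [mul_assoc, ENNReal.ofReal_mul zero_le_two, ENNReal.ofReal_ofNat, ← volume_dyadicBox hε.le]
    exact volume_union_preimage_swap_le _
  have hsum : HasSum (fun k : ℕ ↦ 2 * ε ^ 2 * r ^ (k + 1)) (2 * r / (1 - r) * ε ^ 2) := by
    have h := (hasSum_geometric_of_lt_one hr0.le hr1).mul_left (2 * ε ^ 2 * r)
    rw [show 2 * ε ^ 2 * r * (1 - r)⁻¹ = 2 * r / (1 - r) * ε ^ 2 by ring] at h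
    simpa only [pow_succ', ← mul_assoc] using h
  calc volume {p : ℝ × ℝ | 0 < p.1 ∧ 0 < p.2 ∧ attachmentKernel γ p.1 p.2 ≤ ε}
      ≤ volume (⋃ k, dyadicBox ε β k ∪ Prod.swap ⁻¹' dyadicBox ε β k) :=
        measure_mono (attachmentKernel_sublevel_subset hγ0 hγ1)
    _ ≤ ∑' k, volume (dyadicBox ε β k ∪ Prod.swap ⁻¹' dyadicBox ε β k) := measure_iUnion_le _
    _ ≤ ∑' k, ENNReal.ofReal (2 * ε ^ 2 * r ^ (k + 1)) := ENNReal.tsum_le_tsum hbox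
    _ = ENNReal.ofReal (2 * r / (1 - r) * ε ^ 2) := by
      rw [← ENNReal.ofReal_tsum_of_nonneg (fun k ↦ by positivity) hsum.summable, hsum.tsum_eq]

/-- For `γ ∈ (0, 1/2)` and `S, T` independent `Uniform(0,1)`, the preferential attachment
kernel `X = min(S,T)^γ max(S,T)^{1-γ}` satisfies `P(X ≤ ε) ≤ C' ε²` for all `ε > 0`. -/
theorem stmt_6 {Ω : Type*} [MeasurableSpace Ω] (μ : Measure Ω) [IsProbabilityMeasure μ]
    (γ : ℝ) (hγ0 : 0 < γ) (hγ : γ < 1 / 2)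
    (S T : Ω → ℝ) (hSmeas : Measurable S) (hTmeas : Measurable T)
    (hindep : ProbabilityTheory.IndepFun S T μ)
    (hS : μ.map S = volume.restrict (Set.Ioo (0 : ℝ) 1))
    (hT : μ.map T = volume.restrict (Set.Ioo (0 : ℝ) 1)) :
    ∃ C' : ℝ, 0 < C' ∧ ∀ ε : ℝ, 0 < ε →
      μ {ω | min (S ω) (T ω) ^ γ * max (S ω) (T ω) ^ (1 - γ) ≤ ε}
        ≤ ENNReal.ofReal (C' * ε ^ 2) := by
  obtain ⟨C, hC, hbound⟩ := volume_attachmentKernel_sublevel_le hγ0 hγ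
  refine ⟨C, hC, fun ε hε ↦ ?_⟩
  have hlaw : μ.map (fun ω ↦ (S ω, T ω)) = volume.restrict (Ioo (0 : ℝ) 1 ×ˢ Ioo (0 : ℝ) 1) := by
    rw [(indepFun_iff_map_prod_eq_prod_map_map hSmeas.aemeasurable hTmeas.aemeasurable).1 hindep,
      hS, hT, Measure.prod_restrict, ← Measure.volume_eq_prod]
  calc μ {ω | min (S ω) (T ω) ^ γ * max (S ω) (T ω) ^ (1 - γ) ≤ ε}
      = μ ((fun ω ↦ (S ω, T ω)) ⁻¹' {p | attachmentKernel γ p.1 p.2 ≤ ε}) := rfl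
    _ ≤ μ.map (fun ω ↦ (S ω, T ω)) {p | attachmentKernel γ p.1 p.2 ≤ ε} :=
        Measure.le_map_apply (hSmeas.prodMk hTmeas).aemeasurable _
    _ = volume ({p | attachmentKernel γ p.1 p.2 ≤ ε} ∩ Ioo 0 1 ×ˢ Ioo 0 1) := by
        rw [hlaw, Measure.restrict_apply' (measurableSet_Ioo.prod measurableSet_Ioo)]
    _ ≤ volume {p : ℝ × ℝ | 0 < p.1 ∧ 0 < p.2 ∧ attachmentKernel γ p.1 p.2 ≤ ε} :=
        measure_mono fun p ⟨hp, hp1, hp2⟩ ↦ ⟨hp1.1, hp2.1, hp⟩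
    _ ≤ ENNReal.ofReal (C * ε ^ 2) := hbound ε hε
end

section
/- Let S, T be independent Uniform(0,1) random variables, δ > 2, and suppose ρ : ℝ_{≥0} → [0,1] satisfies ρ(r) ≤ 1 for r < 1 and ρ(r) ≤ r^{-δ} for r ≥ 1. Then there exists a constant C such that for all x, y ∈ ℝ² with ‖x−y‖ ≥ 1, E[ρ(min(S,T)^{1/2} · ‖x−y‖²)] ≤ C·‖x−y‖^{-4}. -/
open MeasureTheory Set

/-! Put `ε = ‖x - y‖⁻⁴` and `h(u) = 1` for `u < ε`, `h(u) = (ε / u)^{δ/2}` for `u ≥ ε`.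
The bounds on `ρ` give `ρ(m^{1/2} ‖x - y‖²) ≤ h(m)`, and since `h ≥ 0` while `min(S, T)` is one
of `S`, `T`, also `h(min(S, T)) ≤ h(S) + h(T)`. The expectation is therefore at most
`2 ∫₀¹ h = 2 (ε + (ε - ε^{δ/2}) / (δ/2 - 1))`, which is `O(ε)` because `δ/2 > 1`. -/

noncomputable def cutoffPower (ε β u : ℝ) : ℝ := if u < ε then 1 else (ε / u) ^ β

section cutoffPower

variable {ε β : ℝ}

lemma cutoffPower_nonneg (hε : 0 ≤ ε) (u : ℝ) : 0 ≤ cutoffPower ε β u := by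
  unfold cutoffPower
  split_ifs with hu
  · exact zero_le_one
  · exact Real.rpow_nonneg (div_nonneg hε (hε.trans (not_lt.1 hu))) _

lemma cutoffPower_le_one (hε : 0 ≤ ε) (hβ : 0 ≤ β) (u : ℝ) : cutoffPower ε β u ≤ 1 := by
  unfold cutoffPower
  split_ifs with hu
  · exact le_rfl
  · have hεu : ε ≤ u := not_lt.1 hu
    exact Real.rpow_le_one (div_nonneg hε (hε.trans hεu))
      (div_le_one_of_le₀ hεu (hε.trans hεu)) hβ

lemma measurable_cutoffPower : Measurable (cutoffPower ε β) :=
  Measurable.ite measurableSet_Iio measurable_const (by fun_prop)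

lemma integrable_cutoffPower {ν : Measure ℝ} [IsFiniteMeasure ν] (hε : 0 ≤ ε) (hβ : 0 ≤ β) :
    Integrable (cutoffPower ε β) ν :=
  Integrable.of_bound measurable_cutoffPower.aestronglyMeasurable 1 <| ae_of_all _ fun u => by
    rw [Real.norm_of_nonneg (cutoffPower_nonneg hε u)]
    exact cutoffPower_le_one hε hβ u

lemma setIntegral_cutoffPower_Ioo (hε : 0 < ε) :
    ∫ u in Ioo 0 ε, cutoffPower ε β u = ε := by
  have hone : EqOn (cutoffPower ε β) (fun _ => 1) (Ioo 0 ε) := fun u hu => if_pos hu.2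
  rw [setIntegral_congr_fun measurableSet_Ioo hone]
  simp [hε.le]

lemma setIntegral_cutoffPower_Ico (hε : 0 < ε) (hε1 : ε ≤ 1) (hβ : 1 < β) :
    ∫ u in Ico ε 1, cutoffPower ε β u = (ε - ε ^ β) / (β - 1) := by
  have hpow : EqOn (cutoffPower ε β) (fun u => ε ^ β * u ^ (-β)) (Ico ε 1) := fun u hu => by
    have hu0 : 0 ≤ u := hε.le.trans hu.1
    dsimp only
    rw [cutoffPower, if_neg (not_lt.2 hu.1), Real.div_rpow hε.le hu0, Real.rpow_neg hu0,
      div_eq_mul_inv]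
  have hzero : (0 : ℝ) ∉ uIcc ε 1 := by
    rw [uIcc_of_le hε1]
    exact fun h => hε.not_ge h.1
  rw [setIntegral_congr_fun measurableSet_Ico hpow, integral_const_mul,
    setIntegral_congr_set Ico_ae_eq_Ioc, ← intervalIntegral.integral_of_le hε1,
    integral_rpow (Or.inr ⟨by linarith, hzero⟩), Real.one_rpow, mul_div_assoc', mul_sub, mul_one,
    ← Real.rpow_add hε, add_neg_cancel_left, Real.rpow_one]
  rw [div_eq_div_iff (by linarith) (by linarith)]
  ring

lemma setIntegral_cutoffPower_Ioo_zero_one_le (hε : 0 < ε) (hε1 : ε ≤ 1) (hβ : 1 < β) :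
    ∫ u in Ioo 0 1, cutoffPower ε β u ≤ (1 + (β - 1)⁻¹) * ε := by
  have hint : IntegrableOn (cutoffPower ε β) (Ioo 0 1) :=
    integrable_cutoffPower hε.le (by linarith)
  rw [← Ioo_union_Ico_eq_Ioo hε hε1, setIntegral_union (Ico_disjoint_Ico_same.mono_left Ioo_subset_Ico_self) measurableSet_Ico
    (hint.mono_set (Ioo_subset_Ioo_right hε1)) (hint.mono_set fun u hu => ⟨hε.trans_le hu.1, hu.2⟩),
    setIntegral_cutoffPower_Ioo hε, setIntegral_cutoffPower_Ico hε hε1 hβ]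
  have : (ε - ε ^ β) / (β - 1) ≤ ε / (β - 1) :=
    div_le_div_of_nonneg_right (by linarith [Real.rpow_nonneg hε.le β]) (by linarith)
  linarith [div_eq_mul_inv ε (β - 1)]

end cutoffPower

lemma apply_rpow_div_le_cutoffPower {ρ : ℝ → ℝ} {γ δ ε m : ℝ} (hρ1 : ∀ r : ℝ, r < 1 → ρ r ≤ 1)
    (hρδ : ∀ r : ℝ, 1 ≤ r → ρ r ≤ r ^ (-δ)) (hγ : 0 < γ) (hε : 0 < ε) (hm : 0 ≤ m) :
    ρ ((m / ε) ^ γ) ≤ cutoffPower ε (γ * δ) m := by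
  have hmε : 0 ≤ m / ε := div_nonneg hm hε.le
  unfold cutoffPower
  split_ifs with h
  · exact hρ1 _ (Real.rpow_lt_one hmε ((div_lt_one hε).2 h) hγ)
  · calc ρ ((m / ε) ^ γ) ≤ ((m / ε) ^ γ) ^ (-δ) :=
          hρδ _ (Real.one_le_rpow ((one_le_div hε).2 (not_lt.1 h)) hγ.le)
      _ = (ε / m) ^ (γ * δ) := by
          rw [← Real.rpow_mul hmε, mul_neg, Real.rpow_neg hmε, ← Real.inv_rpow hmε, inv_div]

lemma integral_comp_min_le {Ω : Type*} [MeasurableSpace Ω] {μ : Measure Ω} {ν : Measure ℝ}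
    {S T : Ω → ℝ} (hS : AEMeasurable S μ) (hT : AEMeasurable T μ)
    (hSν : μ.map S = ν) (hTν : μ.map T = ν) {f g : ℝ → ℝ} (hg : ∀ u, 0 ≤ g u)
    (hf : ∀ u, 0 ≤ f u) (hfν : Integrable f ν) (hgf : ∀ᵐ u ∂ν, g u ≤ f u) :
    ∫ ω, g (min (S ω) (T ω)) ∂μ ≤ 2 * ∫ u, f u ∂ν := by
  have hfS' : Integrable f (μ.map S) := hSν ▸ hfν
  have hfT' : Integrable f (μ.map T) := hTν ▸ hfν
  have hfS : Integrable (fun ω => f (S ω)) μ :=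
    (integrable_map_measure hfS'.aestronglyMeasurable hS).1 hfS'
  have hfT : Integrable (fun ω => f (T ω)) μ :=
    (integrable_map_measure hfT'.aestronglyMeasurable hT).1 hfT'
  have hmin : ∀ᵐ ω ∂μ, g (min (S ω) (T ω)) ≤ f (S ω) + f (T ω) := by
    filter_upwards [ae_of_ae_map hS (hSν ▸ hgf), ae_of_ae_map hT (hTν ▸ hgf)]
      with ω hgfS hgfT
    rcases min_choice (S ω) (T ω) with h | h <;> rw [h] <;> linarith [hf (S ω), hf (T ω)]
  calc ∫ ω, g (min (S ω) (T ω)) ∂μ ≤ ∫ ω, f (S ω) + f (T ω) ∂μ :=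
        integral_mono_of_nonneg (ae_of_all _ fun ω => hg _) (hfS.add hfT) hmin
    _ = 2 * ∫ u, f u ∂ν := by
        rw [integral_add hfS hfT, ← integral_map hS hfS'.aestronglyMeasurable,
          ← integral_map hT hfT'.aestronglyMeasurable, hSν, hTν]
        ring

lemma rpow_half_mul_sq_eq_rpow_half_div {a m : ℝ} (ha : 0 < a) (hm : 0 ≤ m) :
    m ^ (1 / 2 : ℝ) * a ^ 2 = (m / a ^ (-4 : ℝ)) ^ (1 / 2 : ℝ) := by
  rw [Real.rpow_neg ha.le, div_inv_eq_mul, Real.mul_rpow hm (by positivity),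
    ← Real.rpow_natCast, ← Real.rpow_mul ha.le]
  norm_num

theorem stmt_9_general {Ω : Type*} [MeasurableSpace Ω] (μ : Measure Ω)
    (δ : ℝ) (hδ : 2 < δ)
    (S T : Ω → ℝ) (hSmeas : Measurable S) (hTmeas : Measurable T)
    (hS : μ.map S = volume.restrict (Set.Ioo (0 : ℝ) 1))
    (hT : μ.map T = volume.restrict (Set.Ioo (0 : ℝ) 1))
    (ρ : ℝ → ℝ)
    (hρ0 : ∀ r, 0 ≤ ρ r) (hρ1 : ∀ r : ℝ, r < 1 → ρ r ≤ 1)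
    (hρδ : ∀ r : ℝ, 1 ≤ r → ρ r ≤ r ^ (-δ)) :
    ∃ C : ℝ, ∀ x y : EuclideanSpace ℝ (Fin 2), 1 ≤ ‖x - y‖ →
      ∫ ω, ρ (min (S ω) (T ω) ^ (1 / 2 : ℝ) * ‖x - y‖ ^ 2) ∂μ
        ≤ C * ‖x - y‖ ^ (-4 : ℝ) := by
  refine ⟨2 * (1 + (1 / 2 * δ - 1)⁻¹), fun x y hxy => ?_⟩
  have ha : 0 < ‖x - y‖ := one_pos.trans_le hxy
  set ε := ‖x - y‖ ^ (-4 : ℝ)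
  have hε : 0 < ε := Real.rpow_pos_of_pos ha _
  have hbound : ∀ᵐ m ∂volume.restrict (Ioo (0 : ℝ) 1),
      ρ (m ^ (1 / 2 : ℝ) * ‖x - y‖ ^ 2) ≤ cutoffPower ε (1 / 2 * δ) m := by
    filter_upwards [ae_restrict_mem measurableSet_Ioo] with m hm
    rw [rpow_half_mul_sq_eq_rpow_half_div ha hm.1.le]
    exact apply_rpow_div_le_cutoffPower hρ1 hρδ one_half_pos hε hm.1.le
  calc _ ≤ 2 * ∫ m in Ioo 0 1, cutoffPower ε (1 / 2 * δ) m :=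
        integral_comp_min_le hSmeas.aemeasurable hTmeas.aemeasurable hS hT (fun _ => hρ0 _)
          (cutoffPower_nonneg hε.le) (integrable_cutoffPower hε.le (by linarith)) hbound
    _ ≤ 2 * ((1 + (1 / 2 * δ - 1)⁻¹) * ε) := by
        gcongr
        exact setIntegral_cutoffPower_Ioo_zero_one_le hε
          (Real.rpow_le_one_of_one_le_of_nonpos hxy (by norm_num)) (by linarith)
    _ = _ := by ring

/-- Min-kernel bound with `γ = 1/2`, `δ > 2`: for `S, T` independent `Uniform(0,1)` and a
profile `ρ` with `ρ(r) ≤ 1` for `r < 1` and `ρ(r) ≤ r^{-δ}` for `r ≥ 1`, one has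
`E[ρ(min(S,T)^{1/2} ‖x−y‖²)] ≤ C ‖x−y‖^{-4}` whenever `‖x−y‖ ≥ 1`. -/
theorem stmt_9 {Ω : Type*} [MeasurableSpace Ω] (μ : Measure Ω) [IsProbabilityMeasure μ]
    (δ : ℝ) (hδ : 2 < δ)
    (S T : Ω → ℝ) (hSmeas : Measurable S) (hTmeas : Measurable T)
    (hindep : ProbabilityTheory.IndepFun S T μ)
    (hS : μ.map S = volume.restrict (Set.Ioo (0 : ℝ) 1))
    (hT : μ.map T = volume.restrict (Set.Ioo (0 : ℝ) 1))
    (ρ : ℝ → ℝ) (hρmeas : Measurable ρ)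
    (hρ0 : ∀ r, 0 ≤ ρ r) (hρ1 : ∀ r : ℝ, r < 1 → ρ r ≤ 1)
    (hρδ : ∀ r : ℝ, 1 ≤ r → ρ r ≤ r ^ (-δ)) :
    ∃ C : ℝ, ∀ x y : EuclideanSpace ℝ (Fin 2), 1 ≤ ‖x - y‖ →
      ∫ ω, ρ (min (S ω) (T ω) ^ (1 / 2 : ℝ) * ‖x - y‖ ^ 2) ∂μ
        ≤ C * ‖x - y‖ ^ (-4 : ℝ) :=
  stmt_9_general μ δ hδ S T hSmeas hTmeas hS hT ρ hρ0 hρ1 hρδ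
end

section
/- Let (U_k)_{k≥1} be nonnegative random variables and let C₁ ≥ 1 be a constant with U_k ≤ C₁·3^k almost surely for all k. Suppose for all k and all real j we have P(U_k ≥ 3^j) ≤ C·3^{-(k+j)/2}. Then there exists a constant C₂ < ∞ such that for every j ∈ ℕ, P(∑_{k=1}^∞ U_k > C₂·3^j) ≤ 5C·3^{-j}. In particular, ∑_{k=1}^∞ U_k has a Cauchy tail. -/
open MeasureTheory Real

/-- If nonnegative random variables `U_k` satisfy `U_k ≤ C₁ 3^k` and
`P(U_k ≥ 3^j) ≤ C 3^{-(k+j)/2}` for all `k` and real `j`, then there is `C₂` such that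
`P(∑_k U_k > C₂ 3^j) ≤ 5C 3^{-j}` for every `j ∈ ℕ`; i.e. `∑ U_k` has a Cauchy tail. -/
theorem stmt_12 {Ω : Type*} [MeasurableSpace Ω] (μ : Measure Ω) [IsProbabilityMeasure μ]
    (U : ℕ → Ω → ℝ) (hUmeas : ∀ k, Measurable (U k)) (hUnonneg : ∀ k ω, 0 ≤ U k ω)
    (C₁ : ℝ) (hC₁ : 1 ≤ C₁) (hbd : ∀ k ω, U k ω ≤ C₁ * 3 ^ k)
    (C : ℝ) (hC : 0 < C)
    (htail : ∀ (k : ℕ) (j : ℝ),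
      μ {ω | (3 : ℝ) ^ j ≤ U k ω} ≤ ENNReal.ofReal (C * 3 ^ (-((k : ℝ) + j) / 2))) :
    ∃ C₂ : ℝ, ∀ j : ℕ,
      μ {ω | C₂ * 3 ^ j < ∑' k, U k ω} ≤ ENNReal.ofReal (5 * C * 3 ^ (-(j : ℝ))) := by
  refine ⟨C₁ + 3, fun j => ?_⟩
  set r : ℝ := (3:ℝ) ^ (-(1:ℝ)/2) with hrdef
  set q : ℝ := (3:ℝ) ^ (-(1:ℝ)/4) with hqdef
  have h3 : (1:ℝ) < 3 := by norm_num
  have hr0 : 0 < r := rpow_pos_of_pos (by norm_num) _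
  have hq0 : 0 < q := rpow_pos_of_pos (by norm_num) _
  have hr1 : r < 1 := rpow_lt_one_of_one_lt_of_neg h3 (by norm_num)
  have hq1 : q < 1 := rpow_lt_one_of_one_lt_of_neg h3 (by norm_num)
  have hrle : r ≤ 2/3 := by
    have h2 : r^2 = 1/3 := by
      rw [hrdef, ← Real.rpow_natCast ((3:ℝ) ^ (-(1:ℝ)/2)) 2,
        ← Real.rpow_mul (by norm_num : (0:ℝ) ≤ 3)]
      norm_num
    have := le_of_pow_le_pow_left₀ (n := 2) (by norm_num) (by norm_num : (0:ℝ) ≤ 2/3)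
      (by rw [h2]; norm_num)
    exact this
  have hqle : q ≤ 4/5 := by
    have h4 : q^4 = 1/3 := by
      rw [hqdef, ← Real.rpow_natCast ((3:ℝ) ^ (-(1:ℝ)/4)) 4,
        ← Real.rpow_mul (by norm_num : (0:ℝ) ≤ 3)]
      norm_num
    exact le_of_pow_le_pow_left₀ (n := 4) (by norm_num) (by norm_num : (0:ℝ) ≤ 4/5)
      (by rw [h4]; norm_num)
  -- the geometric cutoff
  have hkey : ∀ i : ℕ, (3:ℝ) ^ ((j:ℝ) - i/2) = 3 ^ j * r ^ i := by
    intro i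
    have : (3:ℝ) ^ j * r ^ i = (3:ℝ) ^ ((j:ℝ) + (-(1:ℝ)/2) * i) := by
      rw [Real.rpow_add (by norm_num : (0:ℝ) < 3),
        Real.rpow_mul (by norm_num : (0:ℝ) ≤ 3), Real.rpow_natCast, Real.rpow_natCast]
    rw [this]
    congr 1
    ring
  set A : ℕ → Set Ω := fun i => {ω | (3:ℝ) ^ ((j:ℝ) - i/2) ≤ U (i + j) ω} with hA
  have hsub : {ω | (C₁ + 3) * 3 ^ j < ∑' k, U k ω} ⊆ ⋃ i, A i := by
    intro ω hω
    by_contra hcon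
    simp only [Set.mem_iUnion, hA, Set.mem_setOf_eq, not_exists, not_le] at hcon
    have hgsum : Summable (fun i : ℕ => (3:ℝ) ^ j * r ^ i) :=
      (summable_geometric_of_lt_one hr0.le hr1).mul_left _
    have htails : Summable (fun i : ℕ => U (i + j) ω) :=
      Summable.of_nonneg_of_le (fun i => hUnonneg _ _)
        (fun i => by rw [← hkey]; exact (hcon i).le) hgsum
    have hsum : Summable (fun k => U k ω) := (summable_nat_add_iff j).mp htails
    have hsplit : (∑ k ∈ Finset.range j, U k ω) + ∑' i, U (i + j) ω = ∑' k, U k ω :=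
      Summable.sum_add_tsum_nat_add j hsum
    have hhead : ∑ k ∈ Finset.range j, U k ω ≤ C₁ * 3 ^ j := by
      calc ∑ k ∈ Finset.range j, U k ω ≤ ∑ k ∈ Finset.range j, C₁ * 3 ^ k :=
            Finset.sum_le_sum (fun k _ => hbd k ω)
        _ = C₁ * ((3 ^ j - 1)/(3 - 1)) := by
            rw [← Finset.mul_sum, geom_sum_eq (by norm_num : (3:ℝ) ≠ 1)]
        _ ≤ C₁ * 3 ^ j := by
            have h1 : (0:ℝ) < 3 ^ j := pow_pos (by norm_num) j
            have h0 : (0:ℝ) ≤ C₁ := by linarith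
            nlinarith
    have htailbd : ∑' i, U (i + j) ω ≤ 3 ^ j * (1 - r)⁻¹ := by
      calc ∑' i, U (i + j) ω ≤ ∑' i : ℕ, (3:ℝ) ^ j * r ^ i :=
            Summable.tsum_le_tsum (fun i => by rw [← hkey]; exact (hcon i).le) htails hgsum
        _ = 3 ^ j * (1 - r)⁻¹ := by
            rw [tsum_mul_left, tsum_geometric_of_lt_one hr0.le hr1]
    have hinv : (1 - r)⁻¹ ≤ 3 := by
      rw [inv_le_comm₀ (by linarith) (by norm_num)]
      linarith
    have h3j : (0:ℝ) < 3 ^ j := pow_pos (by norm_num) j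
    have : ∑' k, U k ω ≤ (C₁ + 3) * 3 ^ j := by
      rw [← hsplit]
      have : (3:ℝ) ^ j * (1 - r)⁻¹ ≤ 3 ^ j * 3 :=
        mul_le_mul_of_nonneg_left hinv h3j.le
      nlinarith
    exact absurd hω (not_lt.mpr this)
  have hqi : ∀ i : ℕ, C * 3 ^ (-((((i + j : ℕ)) : ℝ) + ((j:ℝ) - i/2)) / 2)
      = C * ((3:ℝ) ^ (-(j:ℝ)) * q ^ i) := by
    intro i
    congr 1
    have : (3:ℝ) ^ (-(j:ℝ)) * q ^ i = (3:ℝ) ^ (-(j:ℝ) + (-(1:ℝ)/4) * i) := by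
      rw [Real.rpow_add (by norm_num : (0:ℝ) < 3),
        Real.rpow_mul (by norm_num : (0:ℝ) ≤ 3), Real.rpow_natCast]
    rw [this]
    congr 1
    push_cast
    ring
  have hsumq : Summable (fun i : ℕ => C * ((3:ℝ) ^ (-(j:ℝ)) * q ^ i)) :=
    ((summable_geometric_of_lt_one hq0.le hq1).mul_left _).mul_left _
  calc μ {ω | (C₁ + 3) * 3 ^ j < ∑' k, U k ω} ≤ μ (⋃ i, A i) := measure_mono hsub
    _ ≤ ∑' i, μ (A i) := measure_iUnion_le _
    _ ≤ ∑' i, ENNReal.ofReal (C * ((3:ℝ) ^ (-(j:ℝ)) * q ^ i)) := by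
        refine ENNReal.tsum_le_tsum (fun i => ?_)
        rw [← hqi i]
        exact htail (i + j) ((j:ℝ) - i/2)
    _ = ENNReal.ofReal (∑' i, C * ((3:ℝ) ^ (-(j:ℝ)) * q ^ i)) := by
        rw [ENNReal.ofReal_tsum_of_nonneg (fun i => ?_) hsumq]
        positivity
    _ ≤ ENNReal.ofReal (5 * C * 3 ^ (-(j : ℝ))) := by
        apply ENNReal.ofReal_le_ofReal
        rw [tsum_mul_left, tsum_mul_left, tsum_geometric_of_lt_one hq0.le hq1]
        have h3j : (0:ℝ) < (3:ℝ) ^ (-(j:ℝ)) := rpow_pos_of_pos (by norm_num) _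
        have hinv : (1 - q)⁻¹ ≤ 5 := by
          rw [inv_le_comm₀ (by linarith) (by norm_num)]
          linarith
        nlinarith [mul_le_mul_of_nonneg_left hinv (mul_pos hC h3j).le]
end

section
/- Let d ≥ 1 and s < 2d. Define disjoint boxes A_k ⊂ ℤ^d of side length 2^k (so |A_k| = 2^{kd}) whose pairwise distances satisfy: for all x ∈ A_k and y ∈ A_{k+1}, ‖x − y‖ ≤ c₀·2^k for a constant c₀. Consider the uniform flow θ between consecutive boxes sending θ(x,y) = |A_k|^{-1}|A_{k+1}|^{-1} along each pair (x,y) ∈ A_k × A_{k+1}. If conductances satisfy c_{x,y} ≥ c·‖x−y‖^{-s} for some c > 0, then the total energy ∑_{k≥K} ∑_{x∈A_k} ∑_{y∈A_{k+1}} θ(x,y)²/c_{x,y} is finite. -/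
open Finset

/-- Energy estimate for the uniform flow between consecutive boxes `A_k` of cardinality
`2^{kd}`, with conductances `c_{x,y} ≥ c ‖x−y‖^{-s}` and `‖x−y‖ ≤ c₀ 2^k` between
consecutive boxes: for `s < 2d` the total energy is finite. -/
theorem stmt_13 (d : ℕ) (hd : 1 ≤ d) (s : ℝ) (hs0 : 0 < s) (hs : s < 2 * d)
    (A : ℕ → Finset (Fin d → ℤ)) (hcard : ∀ k, (A k).card = 2 ^ (k * d))
    (c₀ : ℝ) (hc₀ : 0 < c₀)
    (hdist : ∀ k, ∀ x ∈ A k, ∀ y ∈ A (k + 1),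
      1 ≤ ‖(fun i => ((x i - y i : ℤ) : ℝ))‖ ∧
      ‖(fun i => ((x i - y i : ℤ) : ℝ))‖ ≤ c₀ * 2 ^ k)
    (cond : (Fin d → ℤ) → (Fin d → ℤ) → ℝ) (c : ℝ) (hc : 0 < c)
    (hcond : ∀ k, ∀ x ∈ A k, ∀ y ∈ A (k + 1),
      c * ‖(fun i => ((x i - y i : ℤ) : ℝ))‖ ^ (-s) ≤ cond x y) :
    Summable (fun k : ℕ => ∑ x ∈ A k, ∑ y ∈ A (k + 1),
      (((2 : ℝ) ^ (k * d) * 2 ^ ((k + 1) * d))⁻¹) ^ 2 / cond x y) := by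
  have hexp : s - 2*(d:ℝ) < 0 := by linarith
  have hrlt : (2:ℝ) ^ (s - 2*(d:ℝ)) < 1 := Real.rpow_lt_one_of_one_lt_of_neg one_lt_two hexp
  have hrpos : (0:ℝ) < (2:ℝ) ^ (s - 2*(d:ℝ)) := Real.rpow_pos_of_pos two_pos _
  have hg : Summable (fun k : ℕ => (c₀^s/c) * ((2:ℝ) ^ (s - 2*(d:ℝ)))^k) :=
    (summable_geometric_of_lt_one hrpos.le hrlt).mul_left _
  refine Summable.of_nonneg_of_le ?_ ?_ hg
  · intro k
    refine Finset.sum_nonneg fun x hx => Finset.sum_nonneg fun y hy => ?_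
    have h1 := (hdist k x hx y hy).1
    have hnp : (0:ℝ) < ‖(fun i => ((x i - y i : ℤ) : ℝ))‖ := lt_of_lt_of_le one_pos h1
    have hpos : 0 < cond x y :=
      lt_of_lt_of_le (by positivity) (hcond k x hx y hy)
    positivity
  · intro k
    set N : ℝ := ((2:ℝ)^(k*d) * 2^((k+1)*d)) with hNdef
    have hN : (0:ℝ) < N := by positivity
    have hbound : ∀ x ∈ A k, ∀ y ∈ A (k+1),
        (N⁻¹)^2 / cond x y ≤ (N⁻¹)^2 * ((c₀ * 2^k)^s / c) := by
      intro x hx y hy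
      have h1 := (hdist k x hx y hy).1
      have h2' := (hdist k x hx y hy).2
      have hnp : (0:ℝ) < ‖(fun i => ((x i - y i : ℤ) : ℝ))‖ := lt_of_lt_of_le one_pos h1
      have hb : c * (c₀*2^k)^(-s) ≤ cond x y := by
        refine le_trans ?_ (hcond k x hx y hy)
        have := Real.rpow_le_rpow_of_nonpos hnp h2' (le_of_lt (neg_neg_of_pos hs0))
        nlinarith
      have hdpos : 0 < c * (c₀*2^k)^(-s) := by positivity
      calc (N⁻¹)^2 / cond x y ≤ (N⁻¹)^2 / (c * (c₀*2^k)^(-s)) := by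
            apply div_le_div_of_nonneg_left (by positivity) hdpos hb
        _ = (N⁻¹)^2 * ((c₀*2^k)^s / c) := by
            rw [Real.rpow_neg (by positivity)]
            have hs' : ((c₀*2^k:ℝ))^s ≠ 0 := by positivity
            field_simp
    calc ∑ x ∈ A k, ∑ y ∈ A (k+1), (N⁻¹)^2 / cond x y
        ≤ ∑ x ∈ A k, ∑ y ∈ A (k+1), (N⁻¹)^2 * ((c₀ * 2^k)^s / c) := by
          exact Finset.sum_le_sum fun x hx => Finset.sum_le_sum fun y hy => hbound x hx y hy
      _ = N * ((N⁻¹)^2 * ((c₀ * 2^k)^s / c)) := by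
          rw [Finset.sum_const, Finset.sum_const, hcard k, hcard (k+1)]
          push_cast
          rw [hNdef]; ring
      _ = N⁻¹ * ((c₀ * 2^k)^s / c) := by
          field_simp
      _ ≤ (c₀^s/c) * ((2:ℝ) ^ (s - 2*(d:ℝ)))^k := by
          have hN2 : N⁻¹ = (2:ℝ) ^ (-(((k*d : ℕ):ℝ) + (((k+1)*d : ℕ):ℝ))) := by
            rw [hNdef, Real.rpow_neg (by norm_num), Real.rpow_add two_pos,
              Real.rpow_natCast, Real.rpow_natCast, mul_inv]
          have hcs : (c₀ * 2^k)^s = c₀^s * (2:ℝ)^((k:ℝ)*s) := by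
            rw [Real.mul_rpow hc₀.le (by positivity), ← Real.rpow_natCast (2:ℝ) k,
              ← Real.rpow_mul (by norm_num)]
          have hgeo : ((2:ℝ) ^ (s - 2*(d:ℝ)))^k = (2:ℝ)^((k:ℝ)*(s - 2*(d:ℝ))) := by
            rw [← Real.rpow_natCast ((2:ℝ) ^ (s - 2*(d:ℝ))) k, ← Real.rpow_mul (by norm_num),
              mul_comm]
          rw [hN2, hcs, hgeo]
          have key : (2:ℝ) ^ (-(((k*d : ℕ):ℝ) + (((k+1)*d : ℕ):ℝ))) * (2:ℝ)^((k:ℝ)*s)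
              ≤ (2:ℝ)^((k:ℝ)*(s - 2*(d:ℝ))) := by
            rw [← Real.rpow_add two_pos]
            apply Real.rpow_le_rpow_of_exponent_le one_le_two
            push_cast
            have : (0:ℝ) ≤ d := Nat.cast_nonneg d
            linarith
          calc (2:ℝ) ^ (-(((k*d : ℕ):ℝ) + (((k+1)*d : ℕ):ℝ))) * (c₀^s * (2:ℝ)^((k:ℝ)*s) / c)
              = (c₀^s/c) * ((2:ℝ) ^ (-(((k*d : ℕ):ℝ) + (((k+1)*d : ℕ):ℝ))) * (2:ℝ)^((k:ℝ)*s)) := by ring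
            _ ≤ (c₀^s/c) * (2:ℝ)^((k:ℝ)*(s - 2*(d:ℝ))) := by
                apply mul_le_mul_of_nonneg_left key (by positivity)
end
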